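/- arXiv:2010.13675 — 2 statements merged into one kernel-verified Lean document; each statement's English description precedes it below -/
import Mathlib

section
/- Suppose C carries a factorization system (E, M) and has the coproduct ∐_{List A} X (injections ι_u) and the product ∏_{List A} Y (projections π_v). Let c : ∐_{List A} X → ∏_{List A} Y be the morphism determined by π_v ∘ c ∘ ι_u = ℓ(u ++ v) for all words u, v, and let c = m ∘ e be an (E,M)-factorization through an object N, with e ∈ E and m ∈ M. Then there is a unique automaton structure Min(ℓ) = (N, i, δ, o) such that e is a morphism of automata from the initial automaton Init(ℓ) to Min(ℓ) and m is a morphism of automata from Min(ℓ) to the final automaton Final(ℓ); this automaton accepts ℓ and is minimal: for every automaton B accepting ℓ there exist an automaton P accepting ℓ and morphisms of automata from P to Min(ℓ) whose underlying morphism of C lies in E, and from P to B whose underlying morphism of C lies in M. -/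
open CategoryTheory

/-- A factorization system `(E, M)` on a category `C`. -/
structure FactSys {C : Type*} [Category C] (E M : MorphismProperty C) : Prop where
  E_iso : ∀ {X Y : C} (f : X ⟶ Y), IsIso f → E f
  M_iso : ∀ {X Y : C} (f : X ⟶ Y), IsIso f → M f
  E_comp : ∀ {X Y Z : C} (f : X ⟶ Y) (g : Y ⟶ Z), E f → E g → E (f ≫ g)
  M_comp : ∀ {X Y Z : C} (f : X ⟶ Y) (g : Y ⟶ Z), M f → M g → M (f ≫ g)
  fact : ∀ {X Y : C} (f : X ⟶ Y), ∃ (Z : C) (e : X ⟶ Z) (m : Z ⟶ Y), E e ∧ M m ∧ e ≫ m = f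
  diag : ∀ {X Y Z W : C} (e : X ⟶ Y) (m : Z ⟶ W) (u : X ⟶ Z) (v : Y ⟶ W),
    E e → M m → e ≫ v = u ≫ m → ∃! d : Y ⟶ Z, e ≫ d = u ∧ d ≫ m = v

/-- A word automaton in a category `C`, with input object `X` and output object `Y`. -/
structure Automaton (A : Type) {C : Type*} [Category C] (X Y : C) where
  S : C
  init : X ⟶ S
  δ : A → (S ⟶ S)
  out : S ⟶ Y

namespace Automaton

variable {A : Type} {C : Type*} [Category C] {X Y : C}

/-- The composite of the transitions along a word. -/
def runFrom (Au : Automaton A X Y) : List A → (Au.S ⟶ Au.S)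
  | [] => 𝟙 Au.S
  | a :: w => Au.δ a ≫ Au.runFrom w

/-- The value of the automaton on a word: `o ∘ δ_{aₙ} ∘ ⋯ ∘ δ_{a₁} ∘ i`. -/
def value (Au : Automaton A X Y) (w : List A) : X ⟶ Y :=
  Au.init ≫ Au.runFrom w ≫ Au.out

/-- The automaton accepts the language `ℓ`. -/
def Accepts (Au : Automaton A X Y) (ℓ : List A → (X ⟶ Y)) : Prop :=
  ∀ w : List A, Au.value w = ℓ w

/-- `φ` is the underlying morphism of a morphism of automata from `Au` to `Bu`. -/
def IsHomMor (Au Bu : Automaton A X Y) (φ : Au.S ⟶ Bu.S) : Prop :=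
  Au.init ≫ φ = Bu.init ∧ (∀ a, Au.δ a ≫ φ = φ ≫ Bu.δ a) ∧ φ ≫ Bu.out = Au.out

end Automaton

/-!
The canonical morphism `c` is itself a morphism of automata `Init(ℓ) ⟶ Final(ℓ)`, and the
unique diagonals of the factorization system transport the transitions along `c = m ∘ e`,
giving the structure on `N`. For minimality, an automaton `B` accepting `ℓ` receives a morphism
`b` from `Init(ℓ)` and maps to `Final(ℓ)` by some `r`; factor `b = m' ∘ e'` through `T`. Since
morphisms out of `Init(ℓ)` are unique, `r ∘ b = c`, so the square `r ∘ m' ∘ e' = m ∘ e` has a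
diagonal `T ⟶ N`, which is again a morphism of automata and lies in `E` by cancellation.
-/

namespace Automaton

variable {A : Type} {C : Type*} [Category C] {X Y : C}

theorem runFrom_append (Au : Automaton A X Y) (u v : List A) :
    Au.runFrom (u ++ v) = Au.runFrom u ≫ Au.runFrom v := by
  induction u with
  | nil => simp [runFrom]
  | cons a u ih => simp [runFrom, ih]

theorem IsHomMor.runFrom_comm {Au Bu : Automaton A X Y} {φ : Au.S ⟶ Bu.S}
    (h : Au.IsHomMor Bu φ) (w : List A) : Au.runFrom w ≫ φ = φ ≫ Bu.runFrom w := by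
  induction w with
  | nil => simp [runFrom]
  | cons a w ih => simp only [runFrom, Category.assoc, ih, reassoc_of% h.2.1 a]

theorem IsHomMor.value_eq {Au Bu : Automaton A X Y} {φ : Au.S ⟶ Bu.S}
    (h : Au.IsHomMor Bu φ) (w : List A) : Au.value w = Bu.value w := by
  simp only [value, ← h.1, ← h.2.2, Category.assoc, reassoc_of% h.runFrom_comm w]

theorem IsHomMor.accepts_iff {Au Bu : Automaton A X Y} {φ : Au.S ⟶ Bu.S}
    (h : Au.IsHomMor Bu φ) {ℓ : List A → (X ⟶ Y)} : Au.Accepts ℓ ↔ Bu.Accepts ℓ := by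
  simp only [Accepts, h.value_eq]

theorem IsHomMor.comp {Au Bu Cu : Automaton A X Y} {φ : Au.S ⟶ Bu.S} {ψ : Bu.S ⟶ Cu.S}
    (hφ : Au.IsHomMor Bu φ) (hψ : Bu.IsHomMor Cu ψ) : Au.IsHomMor Cu (φ ≫ ψ) :=
  ⟨by rw [reassoc_of% hφ.1, hψ.1],
    fun a => by rw [reassoc_of% hφ.2.1 a, hψ.2.1 a, Category.assoc],
    by rw [Category.assoc, hψ.2.2, hφ.2.2]⟩

end Automaton

open Automaton

namespace FactSys

variable {C : Type*} [Category C] {E M : MorphismProperty C}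

theorem E_of_precomp (fs : FactSys E M) {X Y Z : C} {f : X ⟶ Y} {g : Y ⟶ Z}
    (hf : E f) (hfg : E (f ≫ g)) : E g := by
  obtain ⟨W, e, m, he, hm, rfl⟩ := fs.fact g
  -- the diagonal of the square `(f ≫ e) ≫ m = (f ≫ e ≫ m) ≫ 𝟙` is an inverse of `m`
  obtain ⟨d, ⟨hd, hmd⟩, -⟩ := fs.diag (f ≫ e ≫ m) m (f ≫ e) (𝟙 _) hfg hm (by simp)
  obtain ⟨_, -, huniq⟩ := fs.diag (f ≫ e) m (f ≫ e) m (fs.E_comp _ _ hf he) hm rfl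
  have hdm : m ≫ d = 𝟙 _ :=
    (huniq _ ⟨by simpa using hd, by simp [hmd]⟩).trans (huniq _ ⟨by simp, by simp⟩).symm
  exact fs.E_comp _ _ he (fs.E_iso _ ⟨d, hdm, hmd⟩)

variable {A : Type} {X Y : C}

theorem isHomMor_diag (fs : FactSys E M) {Au Bu Cu Du : Automaton A X Y}
    {e : Au.S ⟶ Bu.S} {m : Cu.S ⟶ Du.S} {u : Au.S ⟶ Cu.S} {v : Bu.S ⟶ Du.S}
    {d : Bu.S ⟶ Cu.S} (he : E e) (hm : M m) (heh : Au.IsHomMor Bu e)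
    (hmh : Cu.IsHomMor Du m) (hu : Au.IsHomMor Cu u) (hv : Bu.IsHomMor Du v)
    (hd : e ≫ d = u) (hdm : d ≫ m = v) : Bu.IsHomMor Cu d := by
  refine ⟨by rw [← heh.1, Category.assoc, hd, hu.1], fun a => ?_,
    by rw [← hmh.2.2, reassoc_of% hdm, hv.2.2]⟩
  -- both sides are diagonals of the square `e ≫ (δ a ≫ v) = (δ a ≫ u) ≫ m`
  obtain ⟨_, -, huniq⟩ := fs.diag e m (Au.δ a ≫ u) (Bu.δ a ≫ v) he hm
    (by simp only [← hd, ← hdm, Category.assoc, reassoc_of% heh.2.1 a])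
  refine (huniq _ ⟨?_, ?_⟩).trans (huniq _ ⟨?_, ?_⟩).symm
  · rw [← reassoc_of% heh.2.1 a, hd]
  · rw [Category.assoc, hdm]
  · rw [reassoc_of% hd, hu.2.1 a]
  · rw [Category.assoc, hmh.2.1 a, reassoc_of% hdm, hv.2.1 a]

theorem existsUnique_automaton_of_factorization (fs : FactSys E M)
    {Au Bu : Automaton A X Y} {φ : Au.S ⟶ Bu.S} (hφ : Au.IsHomMor Bu φ) {N : C}
    {e : Au.S ⟶ N} {m : N ⟶ Bu.S} (he : E e) (hm : M m) (hem : e ≫ m = φ) :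
    ∃! t : (X ⟶ N) × (A → (N ⟶ N)) × (N ⟶ Y),
      Au.IsHomMor (Automaton.mk N t.1 t.2.1 t.2.2) e ∧
      (Automaton.mk N t.1 t.2.1 t.2.2).IsHomMor Bu m := by
  have hδ a := fs.diag e m (Au.δ a ≫ e) (m ≫ Bu.δ a) he hm
    (by rw [reassoc_of% hem, ← hφ.2.1 a, Category.assoc, hem])
  choose δ hδ huniq using hδ
  refine ⟨(Au.init ≫ e, δ, m ≫ Bu.out),
    ⟨⟨rfl, fun a => (hδ a).1.symm, by rw [reassoc_of% hem, hφ.2.2]⟩,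
     ⟨by rw [Category.assoc, hem, hφ.1], fun a => (hδ a).2, rfl⟩⟩, ?_⟩
  rintro ⟨i', δ', o'⟩ ⟨he', hm'⟩
  exact Prod.ext he'.1.symm
    (Prod.ext (funext fun a => huniq a _ ⟨(he'.2.1 a).symm, hm'.2.1 a⟩) hm'.2.2.symm)

end FactSys

section InitialFinal

variable {C : Type*} [Category C]

theorem hom_ext_of_existsUnique_desc {J : Type*} {X : J → C} {P : C} {ι : ∀ j, X j ⟶ P}
    (hP : ∀ (Z : C) (f : ∀ j, X j ⟶ Z), ∃! g : P ⟶ Z, ∀ j, ι j ≫ g = f j) {Z : C}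
    {f g : P ⟶ Z} (h : ∀ j, ι j ≫ f = ι j ≫ g) : f = g :=
  (hP Z _).unique h fun _ => rfl

theorem hom_ext_of_existsUnique_lift {J : Type*} {Y : J → C} {R : C} {π : ∀ j, R ⟶ Y j}
    (hR : ∀ (Z : C) (f : ∀ j, Z ⟶ Y j), ∃! g : Z ⟶ R, ∀ j, g ≫ π j = f j) {Z : C}
    {f g : Z ⟶ R} (h : ∀ j, f ≫ π j = g ≫ π j) : f = g :=
  (hR Z _).unique h fun _ => rfl

variable {A : Type} {X Y : C} {ℓ : List A → (X ⟶ Y)}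

section Initial

variable {P : C} {ι : List A → (X ⟶ P)} {δI : A → (P ⟶ P)} {oI : P ⟶ Y}

theorem init_runFrom (hδI : ∀ (a : A) (w : List A), ι w ≫ δI a = ι (w ++ [a]))
    (u w : List A) : ι u ≫ (Automaton.mk P (ι []) δI oI).runFrom w = ι (u ++ w) := by
  induction w generalizing u with
  | nil => simp [runFrom]
  | cons a w ih => simp [runFrom, reassoc_of% hδI, ih]

theorem init_accepts (hδI : ∀ (a : A) (w : List A), ι w ≫ δI a = ι (w ++ [a]))
    (hoI : ∀ w, ι w ≫ oI = ℓ w) : (Automaton.mk P (ι []) δI oI).Accepts ℓ := fun w => by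
  simp only [value, reassoc_of% init_runFrom hδI, List.nil_append, hoI]

theorem init_hom_ext (hP : ∀ (Z : C) (f : List A → (X ⟶ Z)), ∃! g : P ⟶ Z, ∀ w, ι w ≫ g = f w)
    (hδI : ∀ (a : A) (w : List A), ι w ≫ δI a = ι (w ++ [a])) {B : Automaton A X Y}
    {f g : P ⟶ B.S} (hf : (Automaton.mk P (ι []) δI oI).IsHomMor B f)
    (hg : (Automaton.mk P (ι []) δI oI).IsHomMor B g) : f = g := by
  refine hom_ext_of_existsUnique_desc hP fun w => ?_
  rw [← List.nil_append w, ← init_runFrom hδI, Category.assoc, Category.assoc,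
    hf.runFrom_comm, hg.runFrom_comm, reassoc_of% hf.1, reassoc_of% hg.1]

theorem exists_isHomMor_from_init
    (hP : ∀ (Z : C) (f : List A → (X ⟶ Z)), ∃! g : P ⟶ Z, ∀ w, ι w ≫ g = f w)
    (hδI : ∀ (a : A) (w : List A), ι w ≫ δI a = ι (w ++ [a])) (hoI : ∀ w, ι w ≫ oI = ℓ w)
    {B : Automaton A X Y} (hB : B.Accepts ℓ) :
    ∃ b : P ⟶ B.S, (Automaton.mk P (ι []) δI oI).IsHomMor B b := by
  obtain ⟨b, hb, -⟩ := hP B.S fun w => B.init ≫ B.runFrom w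
  refine ⟨b, by simp [hb, runFrom], fun a => ?_, ?_⟩
  · refine hom_ext_of_existsUnique_desc hP fun w => ?_
    simp [reassoc_of% hδI, hb, reassoc_of% hb, runFrom_append, runFrom]
  · refine hom_ext_of_existsUnique_desc hP fun w => ?_
    rw [reassoc_of% hb, hoI, ← hB w, value]

end Initial

section Final

variable {R : C} {π : List A → (R ⟶ Y)} {iF : X ⟶ R} {δF : A → (R ⟶ R)}

theorem exists_isHomMor_to_final
    (hR : ∀ (Z : C) (f : List A → (Z ⟶ Y)), ∃! g : Z ⟶ R, ∀ w, g ≫ π w = f w)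
    (hiF : ∀ w, iF ≫ π w = ℓ w) (hδF : ∀ (a : A) (w : List A), δF a ≫ π w = π ([a] ++ w))
    {B : Automaton A X Y} (hB : B.Accepts ℓ) :
    ∃ r : B.S ⟶ R, B.IsHomMor (Automaton.mk R iF δF (π [])) r := by
  obtain ⟨r, hr, -⟩ := hR B.S fun w => B.runFrom w ≫ B.out
  refine ⟨r, ?_, fun a => ?_, by simp [hr, runFrom]⟩
  · refine hom_ext_of_existsUnique_lift hR fun w => ?_
    rw [Category.assoc, hr, hiF, ← hB w, value]
  · refine hom_ext_of_existsUnique_lift hR fun w => ?_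
    simp [hr, hδF, runFrom]

end Final

theorem isHomMor_init_final {P R : C} {ι : List A → (X ⟶ P)} {π : List A → (R ⟶ Y)}
    (hP : ∀ (Z : C) (f : List A → (X ⟶ Z)), ∃! g : P ⟶ Z, ∀ w, ι w ≫ g = f w)
    (hR : ∀ (Z : C) (f : List A → (Z ⟶ Y)), ∃! g : Z ⟶ R, ∀ w, g ≫ π w = f w)
    {δI : A → (P ⟶ P)} (hδI : ∀ (a : A) (w : List A), ι w ≫ δI a = ι (w ++ [a]))
    {oI : P ⟶ Y} (hoI : ∀ w, ι w ≫ oI = ℓ w) {iF : X ⟶ R} (hiF : ∀ w, iF ≫ π w = ℓ w)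
    {δF : A → (R ⟶ R)} (hδF : ∀ (a : A) (w : List A), δF a ≫ π w = π ([a] ++ w))
    {c : P ⟶ R} (hc : ∀ u v : List A, ι u ≫ c ≫ π v = ℓ (u ++ v)) :
    (Automaton.mk P (ι []) δI oI).IsHomMor (Automaton.mk R iF δF (π [])) c := by
  refine ⟨?_, fun a => ?_, ?_⟩
  · refine hom_ext_of_existsUnique_lift hR fun v => ?_
    simp [hc, hiF]
  · refine hom_ext_of_existsUnique_desc hP fun u => hom_ext_of_existsUnique_lift hR fun v => ?_
    simp [reassoc_of% hδI, hc, hδF]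
  · refine hom_ext_of_existsUnique_desc hP fun u => ?_
    simp [hc, hoI]

end InitialFinal

theorem stmt7_general {A : Type} {C : Type*} [Category C]
    (E M : MorphismProperty C) (fs : FactSys E M) {X Y : C}
    (ℓ : List A → (X ⟶ Y))
    (P : C) (ι : List A → (X ⟶ P))
    (hP : ∀ (Z : C) (f : List A → (X ⟶ Z)), ∃! g : P ⟶ Z, ∀ w, ι w ≫ g = f w)
    (R : C) (π : List A → (R ⟶ Y))
    (hR : ∀ (Z : C) (f : List A → (Z ⟶ Y)), ∃! g : Z ⟶ R, ∀ w, g ≫ π w = f w)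
    (δI : A → (P ⟶ P)) (hδI : ∀ (a : A) (w : List A), ι w ≫ δI a = ι (w ++ [a]))
    (oI : P ⟶ Y) (hoI : ∀ w, ι w ≫ oI = ℓ w)
    (iF : X ⟶ R) (hiF : ∀ w, iF ≫ π w = ℓ w)
    (δF : A → (R ⟶ R)) (hδF : ∀ (a : A) (w : List A), δF a ≫ π w = π ([a] ++ w))
    (c : P ⟶ R) (hc : ∀ u v : List A, ι u ≫ c ≫ π v = ℓ (u ++ v))
    (N : C) (e : P ⟶ N) (m : N ⟶ R) (he : E e) (hm : M m) (hem : e ≫ m = c) :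
    (∃! t : (X ⟶ N) × (A → (N ⟶ N)) × (N ⟶ Y),
      (Automaton.mk P (ι []) δI oI).IsHomMor (Automaton.mk N t.1 t.2.1 t.2.2) e ∧
      (Automaton.mk N t.1 t.2.1 t.2.2).IsHomMor (Automaton.mk R iF δF (π [])) m) ∧
    (∀ (i : X ⟶ N) (δ : A → (N ⟶ N)) (o : N ⟶ Y),
      (Automaton.mk P (ι []) δI oI).IsHomMor (Automaton.mk N i δ o) e →
      (Automaton.mk N i δ o).IsHomMor (Automaton.mk R iF δF (π [])) m →
      (Automaton.mk N i δ o).Accepts ℓ ∧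
      ∀ B : Automaton A X Y, B.Accepts ℓ →
        ∃ Pa : Automaton A X Y, Pa.Accepts ℓ ∧
          ∃ (φ : Pa.S ⟶ N) (ψ : Pa.S ⟶ B.S),
            Pa.IsHomMor (Automaton.mk N i δ o) φ ∧ E φ ∧
            Pa.IsHomMor B ψ ∧ M ψ) := by
  have hcI := isHomMor_init_final hP hR hδI hoI hiF hδF hc
  refine ⟨fs.existsUnique_automaton_of_factorization hcI he hm hem,
    fun i δ o heI hmF => ⟨heI.accepts_iff.1 (init_accepts hδI hoI), fun B hB => ?_⟩⟩
  obtain ⟨b, hb⟩ := exists_isHomMor_from_init hP hδI hoI hB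
  obtain ⟨r, hr⟩ := exists_isHomMor_to_final hR hiF hδF hB
  obtain ⟨T, e', m', he', hm', hbfac⟩ := fs.fact b
  obtain ⟨⟨iT, δT, oT⟩, ⟨he'I, hm'B⟩, -⟩ :=
    fs.existsUnique_automaton_of_factorization hb he' hm' hbfac
  -- `b ≫ r` and `c` are both morphisms out of the initial automaton
  have hsq : e' ≫ m' ≫ r = e ≫ m := by
    rw [reassoc_of% hbfac, hem]
    exact init_hom_ext hP hδI (hb.comp hr) hcI
  obtain ⟨φ, ⟨hφe, hφm⟩, -⟩ := fs.diag e' m e (m' ≫ r) he' hm hsq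
  exact ⟨⟨T, iT, δT, oT⟩, hm'B.accepts_iff.2 hB, φ, m',
    fs.isHomMor_diag he' hm he'I hmF heI (hm'B.comp hr) hφe hφm,
    fs.E_of_precomp he' (hφe ▸ he), hm'B, hm'⟩

/-- an `(E,M)`-factorization of the canonical morphism
`∐_{List A} X ⟶ ∏_{List A} Y` carries a unique automaton structure making `e` and `m`
morphisms of automata from the initial automaton and to the final automaton respectively;
this automaton accepts `ℓ` and is `(E,M)`-minimal among automata accepting `ℓ`. -/
theorem stmt7 {A : Type} [Fintype A] {C : Type*} [Category C]
    (E M : MorphismProperty C) (fs : FactSys E M) {X Y : C}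
    (ℓ : List A → (X ⟶ Y))
    (P : C) (ι : List A → (X ⟶ P))
    (hP : ∀ (Z : C) (f : List A → (X ⟶ Z)), ∃! g : P ⟶ Z, ∀ w, ι w ≫ g = f w)
    (R : C) (π : List A → (R ⟶ Y))
    (hR : ∀ (Z : C) (f : List A → (Z ⟶ Y)), ∃! g : Z ⟶ R, ∀ w, g ≫ π w = f w)
    (δI : A → (P ⟶ P)) (hδI : ∀ (a : A) (w : List A), ι w ≫ δI a = ι (w ++ [a]))
    (oI : P ⟶ Y) (hoI : ∀ w, ι w ≫ oI = ℓ w)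
    (iF : X ⟶ R) (hiF : ∀ w, iF ≫ π w = ℓ w)
    (δF : A → (R ⟶ R)) (hδF : ∀ (a : A) (w : List A), δF a ≫ π w = π ([a] ++ w))
    (c : P ⟶ R) (hc : ∀ u v : List A, ι u ≫ c ≫ π v = ℓ (u ++ v))
    (N : C) (e : P ⟶ N) (m : N ⟶ R) (he : E e) (hm : M m) (hem : e ≫ m = c) :
    (∃! t : (X ⟶ N) × (A → (N ⟶ N)) × (N ⟶ Y),
      (Automaton.mk P (ι []) δI oI).IsHomMor (Automaton.mk N t.1 t.2.1 t.2.2) e ∧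
      (Automaton.mk N t.1 t.2.1 t.2.2).IsHomMor (Automaton.mk R iF δF (π [])) m) ∧
    (∀ (i : X ⟶ N) (δ : A → (N ⟶ N)) (o : N ⟶ Y),
      (Automaton.mk P (ι []) δI oI).IsHomMor (Automaton.mk N i δ o) e →
      (Automaton.mk N i δ o).IsHomMor (Automaton.mk R iF δF (π [])) m →
      (Automaton.mk N i δ o).Accepts ℓ ∧
      ∀ B : Automaton A X Y, B.Accepts ℓ →
        ∃ Pa : Automaton A X Y, Pa.Accepts ℓ ∧
          ∃ (φ : Pa.S ⟶ N) (ψ : Pa.S ⟶ B.S),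
            Pa.IsHomMor (Automaton.mk N i δ o) φ ∧ E φ ∧
            Pa.IsHomMor B ψ ∧ M ψ) :=
  stmt7_general E M fs ℓ P ι hP R π hR δI hδI oI hoI iF hiF δF hδF c hc N e m he hm hem
end

section
/- Let AT = {[a] ++ t : a ∈ A, t ∈ T} and suppose C has the products ∏_{T∪AT} Y and ∏_T Y (with projections π). Define Final_{Q,T}(ℓ) by: B1 = ∏_{T∪AT} Y, B2 = ∏_T Y, i_q the unique morphism with π_w ∘ i_q = ℓ(q ++ w) for all w ∈ T ∪ AT, ē the unique morphism with π_t ∘ ē = π_t for all t ∈ T (the canonical restriction), δ_a the unique morphism with π_t ∘ δ_a = π_{[a] ++ t} for all t ∈ T, and o_t = π_t. Then Final_{Q,T}(ℓ) is a coherent (Q,T)-biautomaton consistent with ℓ, and for every coherent (Q,T)-biautomaton B consistent with ℓ there exists a unique morphism of (Q,T)-biautomata from B to Final_{Q,T}(ℓ). -/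
/-!
A state of `B1` of any coherent biautomaton has a well-defined readout on `T ∪ AT`: on `t ∈ T`
read `ē ; o_t`, on `[a] ++ t` read `δ_a ; o_t`, and coherence makes the two agree on words in
both sets. A pair of morphisms into `Final_{Q,T}(ℓ)` is a morphism of biautomata exactly when
its components are the readouts `B1 → ∏_{T∪AT} Y` and the outputs `B2 → ∏_T Y`; consistency
of `B` is what makes the initial maps commute. Both components exist and are unique by the
universal properties of the two products.
-/

open CategoryTheory

/-- A `(Q,T)`-biautomaton in a category `C` with input object `X` and output object `Y`. -/
structure Biauto (A : Type) {C : Type*} [Category C] (X Y : C)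
    (Q T : Set (List A)) where
  B1 : C
  B2 : C
  i : (q : List A) → q ∈ Q → (X ⟶ B1)
  δ : A → (B1 ⟶ B2)
  eb : B1 ⟶ B2
  o : (t : List A) → t ∈ T → (B2 ⟶ Y)

namespace Biauto

variable {A : Type} {C : Type*} [Category C] {X Y : C} {Q T : Set (List A)}

/-- The coherence conditions of a `(Q,T)`-biautomaton. -/
def Coherent (B : Biauto A X Y Q T) : Prop :=
  (∀ (q : List A) (hq : q ∈ Q) (a : A) (h : q ++ [a] ∈ Q),
    B.i q hq ≫ B.δ a = B.i (q ++ [a]) h ≫ B.eb) ∧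
  (∀ (t : List A) (ht : t ∈ T) (a : A) (h : [a] ++ t ∈ T),
    B.δ a ≫ B.o t ht = B.eb ≫ B.o ([a] ++ t) h)

/-- Consistency of a `(Q,T)`-biautomaton with the language `ℓ`. -/
def Consistent (B : Biauto A X Y Q T) (ℓ : List A → (X ⟶ Y)) : Prop :=
  (∀ (q : List A) (hq : q ∈ Q) (a : A) (t : List A) (ht : t ∈ T),
    B.i q hq ≫ B.δ a ≫ B.o t ht = ℓ (q ++ [a] ++ t)) ∧
  (∀ (q : List A) (hq : q ∈ Q) (t : List A) (ht : t ∈ T),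
    B.i q hq ≫ B.eb ≫ B.o t ht = ℓ (q ++ t))

/-- `(f1, f2)` is a morphism of `(Q,T)`-biautomata from `B` to `B'`. -/
def IsHom (B B' : Biauto A X Y Q T) (f1 : B.B1 ⟶ B'.B1) (f2 : B.B2 ⟶ B'.B2) : Prop :=
  (∀ (q : List A) (hq : q ∈ Q), B.i q hq ≫ f1 = B'.i q hq) ∧
  (∀ a : A, B.δ a ≫ f2 = f1 ≫ B'.δ a) ∧
  (B.eb ≫ f2 = f1 ≫ B'.eb) ∧
  (∀ (t : List A) (ht : t ∈ T), f2 ≫ B'.o t ht = B.o t ht)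

end Biauto

def IsPowerFan {C : Type*} [Category C] {ι : Type*} (S : Set ι) {P Y : C}
    (π : (w : ι) → w ∈ S → (P ⟶ Y)) : Prop :=
  ∀ (Z : C) (f : (w : ι) → w ∈ S → (Z ⟶ Y)), ∃! g : Z ⟶ P, ∀ w hw, g ≫ π w hw = f w hw

theorem IsPowerFan.hom_ext {C : Type*} [Category C] {ι : Type*} {S : Set ι} {P Y : C}
    {π : (w : ι) → w ∈ S → (P ⟶ Y)} (hP : IsPowerFan S π) {Z : C} {g g' : Z ⟶ P}
    (h : ∀ w hw, g ≫ π w hw = g' ≫ π w hw) : g = g' := by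
  obtain ⟨_, _, huniq⟩ := hP Z fun w hw => g' ≫ π w hw
  exact (huniq g h).trans (huniq g' fun _ _ => rfl).symm

namespace Biauto

variable {A : Type} {C : Type*} [Category C] {X Y : C} {Q T : Set (List A)}

/-- The set `AT` of the paper. -/
def prependLetter (T : Set (List A)) : Set (List A) := {w | ∃ a : A, ∃ t ∈ T, w = [a] ++ t}

theorem mem_prependLetter (a : A) {t : List A} (ht : t ∈ T) : [a] ++ t ∈ prependLetter T :=
  ⟨a, t, ht, rfl⟩

theorem ne_nil_of_mem_prependLetter {w : List A} (hw : w ∈ prependLetter T) : w ≠ [] := by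
  obtain ⟨a, t, -, rfl⟩ := hw
  exact List.cons_ne_nil a t

theorem tail_mem_of_mem_prependLetter {w : List A} (hw : w ∈ prependLetter T) : w.tail ∈ T := by
  obtain ⟨a, t, ht, rfl⟩ := hw
  exact ht

open Classical in
noncomputable def readout (B : Biauto A X Y Q T) (w : List A)
    (hw : w ∈ T ∪ prependLetter T) : B.B1 ⟶ Y :=
  if h : w ∈ T then B.eb ≫ B.o w h
  else
    B.δ (w.head (ne_nil_of_mem_prependLetter (hw.resolve_left h))) ≫
      B.o w.tail (tail_mem_of_mem_prependLetter (hw.resolve_left h))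

theorem readout_of_mem (B : Biauto A X Y Q T) {t : List A} (ht : t ∈ T)
    (hw : t ∈ T ∪ prependLetter T) : B.readout t hw = B.eb ≫ B.o t ht :=
  dif_pos ht

theorem readout_append_singleton {B : Biauto A X Y Q T} (hB : B.Coherent) (a : A)
    {t : List A} (ht : t ∈ T) (hw : [a] ++ t ∈ T ∪ prependLetter T) :
    B.readout ([a] ++ t) hw = B.δ a ≫ B.o t ht := by
  by_cases h : [a] ++ t ∈ T
  · rw [readout_of_mem B h, hB.2 t ht a h]
  · exact dif_neg h

/-- The projection equations defining `i_q`, `ē` and `δ_a` in `Final_{Q,T}(ℓ)`. -/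
structure IsFinalMaps {R1 R2 : C} (ℓ : List A → (X ⟶ Y))
    (π1 : (w : List A) → w ∈ T ∪ prependLetter T → (R1 ⟶ Y))
    (π2 : (t : List A) → t ∈ T → (R2 ⟶ Y)) (i : (q : List A) → q ∈ Q → (X ⟶ R1))
    (δ : A → (R1 ⟶ R2)) (eb : R1 ⟶ R2) : Prop where
  i_comp : ∀ q hq w hw, i q hq ≫ π1 w hw = ℓ (q ++ w)
  eb_comp : ∀ t ht, eb ≫ π2 t ht = π1 t (Set.mem_union_left _ ht)
  δ_comp : ∀ a t ht,
    δ a ≫ π2 t ht = π1 ([a] ++ t) (Set.mem_union_right _ (mem_prependLetter a ht))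

namespace IsFinalMaps

variable {ℓ : List A → (X ⟶ Y)} {R1 R2 : C}
  {π1 : (w : List A) → w ∈ T ∪ prependLetter T → (R1 ⟶ Y)}
  {π2 : (t : List A) → t ∈ T → (R2 ⟶ Y)} {i : (q : List A) → q ∈ Q → (X ⟶ R1)}
  {δ : A → (R1 ⟶ R2)} {eb : R1 ⟶ R2}

theorem coherent (h : IsFinalMaps ℓ π1 π2 i δ eb) (hR2 : IsPowerFan T π2) :
    (Biauto.mk R1 R2 i δ eb π2).Coherent := by
  refine ⟨fun q hq a hqa => hR2.hom_ext fun t ht => ?_, fun t ht a hat => ?_⟩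
  · dsimp only
    rw [Category.assoc, h.δ_comp, Category.assoc, h.eb_comp, h.i_comp, h.i_comp,
      List.append_assoc]
  · exact (h.δ_comp a t ht).trans (h.eb_comp _ hat).symm

theorem consistent (h : IsFinalMaps ℓ π1 π2 i δ eb) :
    (Biauto.mk R1 R2 i δ eb π2).Consistent ℓ := by
  refine ⟨fun q hq a t ht => ?_, fun q hq t ht => ?_⟩
  · dsimp only
    rw [h.δ_comp, h.i_comp, List.append_assoc]
  · dsimp only
    rw [h.eb_comp, h.i_comp]

theorem isHom_mk_iff (h : IsFinalMaps ℓ π1 π2 i δ eb) (hR1 : IsPowerFan _ π1)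
    (hR2 : IsPowerFan T π2) {B : Biauto A X Y Q T} (hB : B.Coherent) (hBℓ : B.Consistent ℓ)
    {f1 : B.B1 ⟶ R1} {f2 : B.B2 ⟶ R2} :
    B.IsHom (Biauto.mk R1 R2 i δ eb π2) f1 f2 ↔
      (∀ w hw, f1 ≫ π1 w hw = B.readout w hw) ∧ ∀ t ht, f2 ≫ π2 t ht = B.o t ht := by
  constructor
  · rintro ⟨-, hfδ, hfeb, hfo⟩
    refine ⟨fun w hw => ?_, hfo⟩
    rcases id hw with ht | ⟨a, t, ht, rfl⟩
    · rw [readout_of_mem B ht, ← h.eb_comp, ← Category.assoc, ← hfeb, Category.assoc, hfo]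
    · rw [readout_append_singleton hB a ht, ← h.δ_comp, ← Category.assoc, ← hfδ,
        Category.assoc, hfo]
  · rintro ⟨hf1, hf2⟩
    refine ⟨fun q hq => hR1.hom_ext fun w hw => ?_, fun a => hR2.hom_ext fun t ht => ?_,
      hR2.hom_ext fun t ht => ?_, hf2⟩
    · rw [Category.assoc, hf1, h.i_comp]
      rcases id hw with ht | ⟨a, t, ht, rfl⟩
      · rw [readout_of_mem B ht, hBℓ.2]
      · rw [readout_append_singleton hB a ht, hBℓ.1, List.append_assoc]
    · rw [Category.assoc, Category.assoc, hf2, h.δ_comp, hf1, readout_append_singleton hB a ht]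
    · rw [Category.assoc, Category.assoc, hf2, h.eb_comp, hf1, readout_of_mem B ht]

end IsFinalMaps

end Biauto

theorem stmt10_general {A : Type} {C : Type*} [Category C] {X Y : C}
    (ℓ : List A → (X ⟶ Y)) (Q T : Set (List A))
    (R1 : C)
    (π1 : (w : List A) → w ∈ T ∪ {w | ∃ a : A, ∃ t ∈ T, w = [a] ++ t} → (R1 ⟶ Y))
    (hR1 : ∀ (Z : C)
        (f : (w : List A) → w ∈ T ∪ {w | ∃ a : A, ∃ t ∈ T, w = [a] ++ t} → (Z ⟶ Y)),
      ∃! g : Z ⟶ R1, ∀ w hw, g ≫ π1 w hw = f w hw)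
    (R2 : C) (π2 : (t : List A) → t ∈ T → (R2 ⟶ Y))
    (hR2 : ∀ (Z : C) (f : (t : List A) → t ∈ T → (Z ⟶ Y)),
      ∃! g : Z ⟶ R2, ∀ (t : List A) (ht : t ∈ T), g ≫ π2 t ht = f t ht)
    (i : (q : List A) → q ∈ Q → (X ⟶ R1))
    (hi : ∀ (q : List A) (hq : q ∈ Q) (w : List A) hw,
      i q hq ≫ π1 w hw = ℓ (q ++ w))
    (eb : R1 ⟶ R2)
    (heb : ∀ (t : List A) (ht : t ∈ T),
      eb ≫ π2 t ht = π1 t (Set.mem_union_left _ ht))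
    (δ : A → (R1 ⟶ R2))
    (hδ : ∀ (a : A) (t : List A) (ht : t ∈ T),
      δ a ≫ π2 t ht = π1 ([a] ++ t) (Set.mem_union_right _ ⟨a, t, ht, rfl⟩)) :
    (Biauto.mk R1 R2 i δ eb π2).Coherent ∧
    (Biauto.mk R1 R2 i δ eb π2).Consistent ℓ ∧
    ∀ B : Biauto A X Y Q T, B.Coherent → B.Consistent ℓ →
      ∃! p : (B.B1 ⟶ R1) × (B.B2 ⟶ R2),
        B.IsHom (Biauto.mk R1 R2 i δ eb π2) p.1 p.2 := by
  have hFinal : Biauto.IsFinalMaps ℓ π1 π2 i δ eb := ⟨hi, heb, hδ⟩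
  refine ⟨hFinal.coherent hR2, hFinal.consistent, fun B hB hBℓ => ?_⟩
  obtain ⟨f1, hf1, huniq1⟩ := hR1 B.B1 B.readout
  obtain ⟨f2, hf2, huniq2⟩ := hR2 B.B2 B.o
  refine ⟨(f1, f2), (hFinal.isHom_mk_iff hR1 hR2 hB hBℓ).2 ⟨hf1, hf2⟩, fun p hp => ?_⟩
  obtain ⟨hp1, hp2⟩ := (hFinal.isHom_mk_iff hR1 hR2 hB hBℓ).1 hp
  exact Prod.ext (huniq1 p.1 hp1) (huniq2 p.2 hp2)

/-- the biautomaton built on the powers `∏_{T∪AT} Y` and `∏_T Y` is a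
coherent (Q,T)-biautomaton consistent with `ℓ`, and it is final among coherent
(Q,T)-biautomata consistent with `ℓ`. -/
theorem stmt10 {A : Type} [Fintype A] {C : Type*} [Category C] {X Y : C}
    (ℓ : List A → (X ⟶ Y)) (Q T : Set (List A))
    (hQpre : ∀ u v : List A, u ++ v ∈ Q → u ∈ Q)
    (hTsuf : ∀ u v : List A, u ++ v ∈ T → v ∈ T)
    (hεQ : [] ∈ Q) (hεT : [] ∈ T)
    (R1 : C)
    (π1 : (w : List A) → w ∈ T ∪ {w | ∃ a : A, ∃ t ∈ T, w = [a] ++ t} → (R1 ⟶ Y))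
    (hR1 : ∀ (Z : C)
        (f : (w : List A) → w ∈ T ∪ {w | ∃ a : A, ∃ t ∈ T, w = [a] ++ t} → (Z ⟶ Y)),
      ∃! g : Z ⟶ R1, ∀ w hw, g ≫ π1 w hw = f w hw)
    (R2 : C) (π2 : (t : List A) → t ∈ T → (R2 ⟶ Y))
    (hR2 : ∀ (Z : C) (f : (t : List A) → t ∈ T → (Z ⟶ Y)),
      ∃! g : Z ⟶ R2, ∀ (t : List A) (ht : t ∈ T), g ≫ π2 t ht = f t ht)
    (i : (q : List A) → q ∈ Q → (X ⟶ R1))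
    (hi : ∀ (q : List A) (hq : q ∈ Q) (w : List A) hw,
      i q hq ≫ π1 w hw = ℓ (q ++ w))
    (eb : R1 ⟶ R2)
    (heb : ∀ (t : List A) (ht : t ∈ T),
      eb ≫ π2 t ht = π1 t (Set.mem_union_left _ ht))
    (δ : A → (R1 ⟶ R2))
    (hδ : ∀ (a : A) (t : List A) (ht : t ∈ T),
      δ a ≫ π2 t ht = π1 ([a] ++ t) (Set.mem_union_right _ ⟨a, t, ht, rfl⟩)) :
    (Biauto.mk R1 R2 i δ eb π2).Coherent ∧
    (Biauto.mk R1 R2 i δ eb π2).Consistent ℓ ∧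
    ∀ B : Biauto A X Y Q T, B.Coherent → B.Consistent ℓ →
      ∃! p : (B.B1 ⟶ R1) × (B.B2 ⟶ R2),
        B.IsHom (Biauto.mk R1 R2 i δ eb π2) p.1 p.2 :=
  stmt10_general ℓ Q T R1 π1 hR1 R2 π2 hR2 i hi eb heb δ hδ
end
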